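/- arXiv:1705.03824 — 6 statements merged into one kernel-verified Lean document; each statement's English description precedes it below -/
import Mathlib

section
/- For every real α > -1 and every positive integer n, the best Markov constant satisfies c_n(α)² ≤ n(n+1)/(2(α+1)). -/
open MeasureTheory

/-- The weighted `L²` norm with the Laguerre weight `w_α(x) = x^α e^{-x}` on `(0,∞)`. -/
noncomputable def laguerreNorm (α : ℝ) (f : ℝ → ℝ) : ℝ :=
  Real.sqrt (∫ x in Set.Ioi (0 : ℝ), (f x) ^ 2 * (x ^ α * Real.exp (-x)))

/-- The best Markov constant `c_n(α)` in the inequality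
`‖p'‖_{w_α} ≤ c_n(α) ‖p‖_{w_α}` over polynomials of degree at most `n`. -/
noncomputable def markovConst (n : ℕ) (α : ℝ) : ℝ :=
  sSup {r : ℝ | ∃ p : Polynomial ℝ, p ≠ 0 ∧ p.natDegree ≤ n ∧
    r = laguerreNorm α (fun x => (Polynomial.derivative p).eval x) /
        laguerreNorm α (fun x => p.eval x)}

/-!
Write `s = α + 1` and expand `p` in the generalized Laguerre polynomials `L_k = L_k^{(α)}`. They are
orthogonal for the weight `x^α e^{-x}`, with `‖L_k‖² = Γ(s) h_k` where `h_k = (s)_k / k!`, and they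
satisfy `L_k' = -∑_{j<k} L_j`. So if `p = ∑_{k≤n} a_k L_k`, then `p' = -∑_j (∑_{k>j} a_k) L_j`, and
Cauchy–Schwarz in each coefficient gives `‖p'‖² ≤ (∑_k ∑_{j<k} h_j / h_k) ‖p‖²`, i.e. the
Hilbert–Schmidt norm of differentiation bounds its operator norm. Since `∑_{j<k} h_j = k h_k / s`,
the constant is `∑_{k≤n} k / s = n(n+1) / (2s)`.

The integral only enters through its moments `Γ(s + m) = Γ(s) (s)_m`. Orthogonality then becomes
the vanishing of `k`-th forward differences of polynomials of degree `< k`.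
-/

open Polynomial Finset Nat
open scoped fwdDiff

theorem ascPochhammer_eval_mul_eval_add {S : Type*} [CommSemiring S] (n m : ℕ) (x : S) :
    (ascPochhammer S n).eval x * (ascPochhammer S m).eval (x + n) =
      (ascPochhammer S (n + m)).eval x := by
  rw [← ascPochhammer_mul, eval_mul, eval_comp, eval_add, eval_X, eval_natCast]

theorem sum_range_ascPochhammer_eval_div_factorial {K : Type*} [Field K] [CharZero K]
    (x : K) (m : ℕ) :
    ∑ t ∈ range (m + 1), (ascPochhammer K t).eval x / t ! =
      (ascPochhammer K m).eval (x + 1) / m ! := by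
  induction m with
  | zero => simp
  | succ m ih =>
    have hx : (ascPochhammer K (m + 1)).eval x = x * (ascPochhammer K m).eval (x + 1) := by
      simp [ascPochhammer_succ_left]
    rw [sum_range_succ, ih, hx, ascPochhammer_succ_eval, factorial_succ]
    push_cast
    field_simp
    ring

theorem sum_range_neg_one_pow_mul_choose_mul {R : Type*} [CommRing R] (f : R → R) (k : ℕ)
    (y : R) :
    ∑ i ∈ range (k + 1), (-1) ^ i * (k.choose i : R) * f (y + i) =
      (-1) ^ k * (Δ_[1])^[k] f y := by
  rw [fwdDiff_iter_eq_sum_shift, mul_sum]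
  refine sum_congr rfl fun i hi => ?_
  have hik : i ≤ k := Nat.lt_succ_iff.mp (mem_range.mp hi)
  rw [zsmul_eq_mul, nsmul_one]
  push_cast
  rw [← mul_assoc, ← mul_assoc, ← pow_add, show k + (k - i) = i + 2 * (k - i) by omega, pow_add,
    pow_mul]
  simp

theorem sum_mul_sq_sum_Ioc_le (n : ℕ) (a : ℕ → ℝ) {h : ℕ → ℝ} (hh : ∀ k, 0 < h k) :
    ∑ j ∈ range (n + 1), h j * (∑ k ∈ Ioc j n, a k) ^ 2 ≤
      (∑ k ∈ range (n + 1), (∑ j ∈ range k, h j) / h k) *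
        ∑ k ∈ range (n + 1), a k ^ 2 * h k := by
  set A := ∑ k ∈ range (n + 1), a k ^ 2 * h k
  have hcs : ∀ j, (∑ k ∈ Ioc j n, a k) ^ 2 ≤ (∑ k ∈ Ioc j n, (h k)⁻¹) * A := fun j => by
    refine (sum_sq_le_sum_mul_sum_of_sq_le_mul _ (g := fun k => a k ^ 2 * h k)
      (fun k _ => (inv_pos.mpr (hh k)).le) (fun k _ => by have := hh k; positivity)
      (fun k _ => by field_simp [(hh k).ne']; rfl)).trans ?_
    gcongr
    · exact sum_nonneg fun k _ => (inv_pos.mpr (hh k)).le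
    · exact sum_le_sum_of_subset_of_nonneg (fun k hk => by simp at hk ⊢; omega)
        fun k _ _ => by have := hh k; positivity
  calc ∑ j ∈ range (n + 1), h j * (∑ k ∈ Ioc j n, a k) ^ 2
      ≤ ∑ j ∈ range (n + 1), h j * ((∑ k ∈ Ioc j n, (h k)⁻¹) * A) :=
        sum_le_sum fun j _ => mul_le_mul_of_nonneg_left (hcs j) (hh j).le
    _ = (∑ j ∈ range (n + 1), ∑ k ∈ Ioc j n, h j / h k) * A := by
        simp_rw [sum_mul, mul_sum, div_eq_mul_inv]
        exact sum_congr rfl fun _ _ => sum_congr rfl fun _ _ => by ring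
    _ = (∑ k ∈ range (n + 1), (∑ j ∈ range k, h j) / h k) * A := by
        rw [sum_comm' (t' := range (n + 1)) (s' := range) fun j k => by simp; omega]
        simp_rw [sum_div]

/-- `laguerre s k` is the generalized Laguerre polynomial `L_k^{(s-1)}`:
`laguerreCoeff s k i = (-1)^i binom(k+s-1, k-i) / i!`. -/
noncomputable def laguerreCoeff (s : ℝ) (k i : ℕ) : ℝ :=
  (-1) ^ i * (ascPochhammer ℝ (k - i)).eval (s + i) / ((k - i)! * i !)

noncomputable def laguerre (s : ℝ) (k : ℕ) : ℝ[X] :=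
  ∑ i ∈ range (k + 1), monomial i (laguerreCoeff s k i)

section Laguerre

variable (s : ℝ)

theorem coeff_laguerre (k i : ℕ) :
    (laguerre s k).coeff i = if i ≤ k then laguerreCoeff s k i else 0 := by
  simp [laguerre, coeff_monomial]

theorem natDegree_laguerre_le (k : ℕ) : (laguerre s k).natDegree ≤ k :=
  natDegree_le_iff_coeff_eq_zero.mpr fun i hi => by
    rw [coeff_laguerre, if_neg (not_le.mpr hi)]

theorem coeff_laguerre_self (k : ℕ) : (laguerre s k).coeff k = (-1) ^ k / k ! := by
  simp [coeff_laguerre, laguerreCoeff]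

theorem derivative_laguerre (k : ℕ) :
    derivative (laguerre s k) = -∑ j ∈ range k, laguerre s j := by
  ext i
  simp only [coeff_derivative, coeff_neg, finsetSum_coeff, coeff_laguerre]
  by_cases hik : i + 1 ≤ k
  · obtain ⟨m, rfl⟩ := Nat.exists_eq_add_of_le hik
    have hsum : ∑ j ∈ range (i + 1 + m), (if i ≤ j then laguerreCoeff s j i else 0) =
        (-1) ^ i / i ! * ∑ t ∈ range (m + 1), (ascPochhammer ℝ t).eval (s + i) / t ! := by
      rw [show i + 1 + m = i + (m + 1) by ring, sum_range_add, mul_sum,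
        sum_eq_zero fun j hj => if_neg (by simp at hj; omega), zero_add]
      refine sum_congr rfl fun t _ => ?_
      rw [if_pos (Nat.le_add_right i t), laguerreCoeff, Nat.add_sub_cancel_left]
      ring
    rw [if_pos hik, hsum, sum_range_ascPochhammer_eval_div_factorial]
    simp only [laguerreCoeff, show i + 1 + m - (i + 1) = m by omega, factorial_succ]
    push_cast
    field_simp
    rw [← add_assoc]
    ring
  · rw [if_neg hik, sum_eq_zero fun j hj => if_neg (by simp at hj; omega)]
    simp

theorem exists_eq_sum_laguerre {d : ℕ} {p : ℝ[X]} (hp : p.degree < d) :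
    ∃ a : ℕ → ℝ, p = ∑ k ∈ range d, C (a k) * laguerre s k := by
  induction d generalizing p with
  | zero => exact ⟨0, by simpa using hp⟩
  | succ d ih =>
    set c := p.coeff d / (laguerre s d).coeff d
    have hq : (p - C c * laguerre s d).degree < d := by
      have hLd : (laguerre s d).coeff d ≠ 0 := by simp [coeff_laguerre_self, factorial_ne_zero]
      refine degree_lt_iff_coeff_zero _ _ |>.mpr fun m hm => ?_
      have hpm : d < m → p.coeff m = 0 := fun h =>
        degree_lt_iff_coeff_zero _ _ |>.mp hp m (by exact_mod_cast h)
      rcases (show d ≤ m by exact_mod_cast hm).eq_or_lt with rfl | hdm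
      · simp [c, hLd]
      · simp [hpm hdm, coeff_laguerre, not_le.mpr hdm]
    obtain ⟨a, ha⟩ := ih hq
    refine ⟨Function.update a d c, ?_⟩
    rw [sum_range_succ, Function.update_self, sum_congr rfl fun k hk => by
      rw [Function.update_of_ne (mem_range.mp hk).ne], ← ha]
    ring

end Laguerre

/-- `laguerreFunctional s p = Γ(s)⁻¹ ∫₀^∞ p(x) x^(s-1) e^(-x) dx`, encoded through its moments
`(s)ₙ = Γ(s + n) / Γ(s)`. -/
noncomputable def laguerreFunctional (s : ℝ) : ℝ[X] →ₗ[ℝ] ℝ :=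
  lsum fun n => (ascPochhammer ℝ n).eval s • LinearMap.id

noncomputable def laguerreNormSq (s : ℝ) (k : ℕ) : ℝ := (ascPochhammer ℝ k).eval s / k !

section Orthogonality

variable (s : ℝ)

theorem laguerreFunctional_monomial (n : ℕ) (a : ℝ) :
    laguerreFunctional s (monomial n a) = a * (ascPochhammer ℝ n).eval s := by
  simp [laguerreFunctional, mul_comm]

theorem laguerreFunctional_X_pow_mul_laguerre (m k : ℕ) :
    laguerreFunctional s (X ^ m * laguerre s k) =
      laguerreNormSq s k * ((-1) ^ k * (Δ_[1])^[k] (ascPochhammer ℝ m).eval s) := by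
  rw [laguerre, mul_sum, map_sum, ← sum_range_neg_one_pow_mul_choose_mul, mul_sum]
  refine sum_congr rfl fun i hi => ?_
  have hik : i ≤ k := Nat.lt_succ_iff.mp (mem_range.mp hi)
  have hk : (ascPochhammer ℝ k).eval s =
      (ascPochhammer ℝ i).eval s * (ascPochhammer ℝ (k - i)).eval (s + i) := by
    rw [ascPochhammer_eval_mul_eval_add, Nat.add_sub_cancel' hik]
  rw [X_pow_mul_monomial, laguerreFunctional_monomial, laguerreNormSq, laguerreCoeff,
    Nat.cast_choose ℝ hik, ← ascPochhammer_eval_mul_eval_add, hk]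
  field_simp

theorem laguerreFunctional_X_pow_mul_laguerre_of_le {m k : ℕ} (hmk : m ≤ k) :
    laguerreFunctional s (X ^ m * laguerre s k) =
      if m = k then (-1) ^ k * (ascPochhammer ℝ k).eval s else 0 := by
  rw [laguerreFunctional_X_pow_mul_laguerre]
  split_ifs with h
  · subst h
    have hΔ := (ascPochhammer ℝ m).fwdDiff_iter_degree_eq_factorial
    rw [ascPochhammer_natDegree, (monic_ascPochhammer ℝ m).leadingCoeff] at hΔ
    simp only [hΔ, laguerreNormSq, one_smul, Pi.natCast_apply]
    field_simp
  · rw [fwdDiff_iter_eq_zero_of_degree_lt (by simpa using lt_of_le_of_ne hmk h)]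
    simp

theorem laguerreFunctional_C_mul (a : ℝ) (p : ℝ[X]) :
    laguerreFunctional s (C a * p) = a * laguerreFunctional s p := by
  rw [C_mul', map_smul, smul_eq_mul]

theorem laguerreFunctional_mul_laguerre {q : ℝ[X]} {k : ℕ} (hq : q.natDegree ≤ k) :
    laguerreFunctional s (q * laguerre s k) =
      (-1) ^ k * (ascPochhammer ℝ k).eval s * q.coeff k := by
  conv_lhs => rw [as_sum_range' q (k + 1) (Nat.lt_succ_of_le hq)]
  simp_rw [sum_mul, map_sum, ← C_mul_X_pow_eq_monomial, mul_assoc, laguerreFunctional_C_mul]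
  rw [sum_congr rfl fun m hm => by
    rw [laguerreFunctional_X_pow_mul_laguerre_of_le s (Nat.lt_succ_iff.mp (mem_range.mp hm))]]
  simp only [mul_ite, mul_zero, sum_ite_eq', mem_range, lt_add_one, if_true]
  ring

theorem laguerreFunctional_laguerre_mul_laguerre (j k : ℕ) :
    laguerreFunctional s (laguerre s j * laguerre s k) =
      if j = k then laguerreNormSq s k else 0 := by
  wlog hjk : j ≤ k generalizing j k
  · rw [mul_comm, this k j (le_of_not_ge hjk), if_neg (by omega), if_neg (by omega)]
  rw [laguerreFunctional_mul_laguerre s ((natDegree_laguerre_le s j).trans hjk)]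
  split_ifs with h
  · subst h
    rw [coeff_laguerre_self, laguerreNormSq]
    field_simp
    rw [← pow_mul, pow_mul', neg_one_sq, one_pow, one_mul]
  · rw [coeff_laguerre, if_neg (by omega), mul_zero]

theorem laguerreFunctional_sum_laguerre_sq (N : ℕ) (a : ℕ → ℝ) :
    laguerreFunctional s ((∑ k ∈ range N, C (a k) * laguerre s k) ^ 2) =
      ∑ k ∈ range N, a k ^ 2 * laguerreNormSq s k := by
  have hterm : ∀ j k, C (a j) * laguerre s j * (C (a k) * laguerre s k) =
      C (a j * a k) * (laguerre s j * laguerre s k) := fun j k => by rw [C_mul]; ring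
  simp_rw [sq, sum_mul_sum, hterm, map_sum, laguerreFunctional_C_mul,
    laguerreFunctional_laguerre_mul_laguerre, mul_ite, mul_zero, sum_ite_eq, mem_range]
  exact sum_congr rfl fun k hk => by rw [if_pos (mem_range.mp hk)]

end Orthogonality

theorem laguerreNormSq_pos {s : ℝ} (hs : 0 < s) (k : ℕ) : 0 < laguerreNormSq s k :=
  div_pos (ascPochhammer_pos k s hs) (by positivity)

theorem sum_range_laguerreNormSq {s : ℝ} (hs : s ≠ 0) (k : ℕ) :
    ∑ j ∈ range k, laguerreNormSq s j = k * laguerreNormSq s k / s := by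
  cases k with
  | zero => simp
  | succ m =>
    have hm : (ascPochhammer ℝ (m + 1)).eval s = s * (ascPochhammer ℝ m).eval (s + 1) := by
      simp [ascPochhammer_succ_left]
    simp only [laguerreNormSq]
    rw [sum_range_ascPochhammer_eval_div_factorial, hm, factorial_succ]
    push_cast
    field_simp

theorem sum_range_sum_laguerreNormSq_div {s : ℝ} (hs : 0 < s) (n : ℕ) :
    ∑ k ∈ range (n + 1), (∑ j ∈ range k, laguerreNormSq s j) / laguerreNormSq s k =
      n * (n + 1) / (2 * s) := by
  have hgauss : ∑ k ∈ range (n + 1), (k : ℝ) = n * (n + 1) / 2 := by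
    induction n with
    | zero => simp
    | succ n ih => rw [sum_range_succ, ih]; push_cast; ring
  rw [← div_div, ← hgauss, sum_div]
  refine sum_congr rfl fun k _ => ?_
  rw [sum_range_laguerreNormSq hs.ne']
  field_simp [(laguerreNormSq_pos hs k).ne']

theorem derivative_sum_laguerre (s : ℝ) (n : ℕ) (a : ℕ → ℝ) :
    derivative (∑ k ∈ range (n + 1), C (a k) * laguerre s k) =
      ∑ j ∈ range (n + 1), C (-∑ k ∈ Ioc j n, a k) * laguerre s j := by
  simp_rw [derivative_sum, derivative_C_mul, derivative_laguerre, mul_neg, mul_sum, sum_neg_distrib,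
    map_neg, neg_mul, map_sum, sum_mul]
  rw [sum_comm' (t' := range (n + 1)) (s' := fun j => Ioc j n) fun k j => by simp; omega,
    sum_neg_distrib]

theorem laguerreFunctional_derivative_sq_le {s : ℝ} (hs : 0 < s) {n : ℕ} {p : ℝ[X]}
    (hp : p.natDegree ≤ n) :
    laguerreFunctional s (derivative p ^ 2) ≤
      n * (n + 1) / (2 * s) * laguerreFunctional s (p ^ 2) := by
  obtain ⟨a, rfl⟩ := exists_eq_sum_laguerre s
    (degree_le_natDegree.trans_lt (by exact_mod_cast Nat.lt_succ_of_le hp))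
  rw [derivative_sum_laguerre, laguerreFunctional_sum_laguerre_sq,
    laguerreFunctional_sum_laguerre_sq, ← sum_range_sum_laguerreNormSq_div hs]
  refine le_of_eq_of_le (sum_congr rfl fun j _ => by rw [neg_sq, mul_comm]) ?_
  exact sum_mul_sq_sum_Ioc_le n a (laguerreNormSq_pos hs)

open Set Real

theorem Real.Gamma_add_nat_eq_mul_ascPochhammer {s : ℝ} (hs : 0 < s) (n : ℕ) :
    Gamma (s + n) = Gamma s * (ascPochhammer ℝ n).eval s := by
  induction n with
  | zero => simp
  | succ n ih =>
    rw [Nat.cast_succ, ← add_assoc, Gamma_add_one (by positivity), ih, ascPochhammer_succ_eval]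
    ring

theorem eqOn_exp_neg_mul_rpow (α : ℝ) (n : ℕ) :
    EqOn (fun x : ℝ => exp (-x) * x ^ (α + 1 + n - 1)) (fun x => x ^ n * (x ^ α * exp (-x)))
      (Ioi 0) := fun x hx => by
  dsimp only
  rw [show α + 1 + n - 1 = α + n by ring, rpow_add hx, rpow_natCast]
  ring

section Integral

variable {α : ℝ}

theorem integrableOn_eval_mul_rpow_mul_exp_neg (hα : -1 < α) (p : ℝ[X]) :
    IntegrableOn (fun x => p.eval x * (x ^ α * exp (-x))) (Ioi 0) := by
  induction p using Polynomial.induction_on' with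
  | add p q hp hq =>
    simp_rw [eval_add, add_mul]
    exact hp.add hq
  | monomial n a =>
    have hs : 0 < α + 1 + n := by linarith [n.cast_nonneg (α := ℝ)]
    simp_rw [eval_monomial, mul_assoc]
    exact ((GammaIntegral_convergent hs).congr_fun (eqOn_exp_neg_mul_rpow α n)
      measurableSet_Ioi).const_mul a

theorem integral_eval_mul_rpow_mul_exp_neg (hα : -1 < α) (p : ℝ[X]) :
    ∫ x in Ioi 0, p.eval x * (x ^ α * exp (-x)) =
      Gamma (α + 1) * laguerreFunctional (α + 1) p := by
  induction p using Polynomial.induction_on' with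
  | add p q hp hq =>
    simp_rw [eval_add, add_mul]
    rw [integral_add (integrableOn_eval_mul_rpow_mul_exp_neg hα p)
      (integrableOn_eval_mul_rpow_mul_exp_neg hα q), hp, hq, map_add, mul_add]
  | monomial n a =>
    have hs : 0 < α + 1 + n := by linarith [n.cast_nonneg (α := ℝ)]
    simp_rw [eval_monomial, mul_assoc]
    rw [integral_const_mul, ← setIntegral_congr_fun measurableSet_Ioi (eqOn_exp_neg_mul_rpow α n),
      ← Gamma_eq_integral hs, Gamma_add_nat_eq_mul_ascPochhammer (by linarith),
      laguerreFunctional_monomial]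
    ring

theorem laguerreNorm_eval (hα : -1 < α) (p : ℝ[X]) :
    laguerreNorm α (fun x => p.eval x) = √(Gamma (α + 1) * laguerreFunctional (α + 1) (p ^ 2)) := by
  simp_rw [laguerreNorm, ← eval_pow, integral_eval_mul_rpow_mul_exp_neg hα]

theorem laguerreNorm_derivative_le (hα : -1 < α) {n : ℕ} {p : ℝ[X]} (hp : p.natDegree ≤ n) :
    laguerreNorm α (fun x => (derivative p).eval x) ≤
      √(n * (n + 1) / (2 * (α + 1))) * laguerreNorm α (fun x => p.eval x) := by
  have hs : 0 < α + 1 := by linarith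
  rw [laguerreNorm_eval hα, laguerreNorm_eval hα, ← sqrt_mul (by positivity)]
  refine sqrt_le_sqrt ?_
  calc Gamma (α + 1) * laguerreFunctional (α + 1) (derivative p ^ 2)
      ≤ Gamma (α + 1) * (n * (n + 1) / (2 * (α + 1)) * laguerreFunctional (α + 1) (p ^ 2)) :=
        mul_le_mul_of_nonneg_left (laguerreFunctional_derivative_sq_le hs hp)
          (Gamma_pos_of_pos hs).le
    _ = _ := by ring

end Integral

theorem markov_dorfler_upper_general (α : ℝ) (hα : -1 < α) (n : ℕ) :
    (markovConst n α) ^ 2 ≤ n * (n + 1) / (2 * (α + 1)) := by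
  have hs : 0 < α + 1 := by linarith
  have hC : 0 ≤ (n * (n + 1) / (2 * (α + 1)) : ℝ) := by positivity
  have hle : markovConst n α ≤ √(n * (n + 1) / (2 * (α + 1))) := by
    refine Real.sSup_le ?_ (sqrt_nonneg _)
    rintro _ ⟨p, -, hp, rfl⟩
    exact div_le_of_le_mul₀ (sqrt_nonneg _) (sqrt_nonneg _) (laguerreNorm_derivative_le hα hp)
  have hnonneg : 0 ≤ markovConst n α := by
    refine Real.sSup_nonneg ?_
    rintro _ ⟨p, -, -, rfl⟩
    exact div_nonneg (sqrt_nonneg _) (sqrt_nonneg _)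
  calc markovConst n α ^ 2 ≤ √(n * (n + 1) / (2 * (α + 1))) ^ 2 := pow_le_pow_left₀ hnonneg hle 2
    _ = n * (n + 1) / (2 * (α + 1)) := sq_sqrt hC

theorem markov_dorfler_upper (α : ℝ) (hα : -1 < α) (n : ℕ) (hn : 1 ≤ n) :
    (markovConst n α) ^ 2 ≤ n * (n + 1) / (2 * (α + 1)) :=
  markov_dorfler_upper_general α hα n
end

section
/- For every real α ≥ 1 and all positive integers i < k, one has (Γ(i+α)/Γ(i)) / (Γ(k+α)/Γ(k)) ≤ ((i + (α-1)/2)/(k + (α-1)/2))^α. -/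
open Real

lemma artanh_key (α t : ℝ) (hα : 1 ≤ α) (ht : 0 < t) (hs : α * t < 1) :
    α * (Real.log (1 + t) - Real.log (1 - t)) ≤
      Real.log (1 + α * t) - Real.log (1 - α * t) := by
  have ht1 : t < 1 := by nlinarith
  have h1 : |t| < 1 := by rw [abs_of_pos ht]; exact ht1
  have h2 : |α * t| < 1 := by
    rw [abs_of_pos (by positivity)]; exact hs
  have S1 := (Real.hasSum_log_sub_log_of_abs_lt_one h1).mul_left α
  have S2 := Real.hasSum_log_sub_log_of_abs_lt_one h2
  refine hasSum_le (fun n => ?_) S1 S2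
  have h3 : α * t ^ (2 * n + 1) ≤ (α * t) ^ (2 * n + 1) := by
    rw [mul_pow]
    have : α ≤ α ^ (2 * n + 1) := by
      calc α = α ^ 1 := (pow_one α).symm
      _ ≤ α ^ (2 * n + 1) := pow_le_pow_right₀ hα (by omega)
    nlinarith [pow_pos ht (2 * n + 1)]
  have h4 : (0:ℝ) < 2 * (n:ℝ) + 1 := by positivity
  calc α * (2 * (1 / (2 * (n:ℝ) + 1)) * t ^ (2 * n + 1))
      = 2 * (1 / (2 * (n:ℝ) + 1)) * (α * t ^ (2 * n + 1)) := by ring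
    _ ≤ 2 * (1 / (2 * (n:ℝ) + 1)) * (α * t) ^ (2 * n + 1) := by
        apply mul_le_mul_of_nonneg_left h3; positivity

lemma step_ineq (α y : ℝ) (hα : 1 ≤ α) (hy : 0 < y) :
    ((2 * y + α + 1) / (2 * y + α - 1)) ^ α ≤ (y + α) / y := by
  set b := 2 * y + α with hb
  have hb1 : 1 < b := by simp [hb]; linarith
  have hb0 : 0 < b := by linarith
  set t : ℝ := 1 / b with htdef
  have ht : 0 < t := by positivity
  have hs : α * t < 1 := by
    rw [htdef, mul_one_div, div_lt_one hb0]; linarith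
  have key := artanh_key α t hα ht hs
  have e1 : 1 + t = (b + 1) / b := by rw [htdef]; field_simp
  have e2 : 1 - t = (b - 1) / b := by rw [htdef]; field_simp
  have e3 : 1 + α * t = (b + α) / b := by rw [htdef]; field_simp
  have e4 : 1 - α * t = (b - α) / b := by rw [htdef]; field_simp
  have hbm1 : (0:ℝ) < b - 1 := by linarith
  have hbma : (0:ℝ) < b - α := by simp [hb]; linarith
  have l1 : Real.log (1 + t) - Real.log (1 - t) = Real.log ((b + 1) / (b - 1)) := by
    rw [e1, e2, Real.log_div (by positivity) hb0.ne',
      Real.log_div (by positivity) hb0.ne',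
      Real.log_div (by positivity) (by positivity)]
    ring
  have l2 : Real.log (1 + α * t) - Real.log (1 - α * t)
      = Real.log ((b + α) / (b - α)) := by
    rw [e3, e4, Real.log_div (by positivity) hb0.ne',
      Real.log_div (by positivity) hb0.ne',
      Real.log_div (by positivity) (by positivity)]
    ring
  rw [l1, l2] at key
  have hbase : (0:ℝ) < (b + 1) / (b - 1) := by positivity
  have hrhs : (b + α) / (b - α) = (y + α) / y := by
    rw [hb, div_eq_div_iff (by linarith) hy.ne']; ring
  calc ((2 * y + α + 1) / (2 * y + α - 1)) ^ α
      = Real.exp (α * Real.log ((b + 1) / (b - 1))) := by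
        rw [← hb, Real.rpow_def_of_pos hbase]; ring_nf
    _ ≤ Real.exp (Real.log ((b + α) / (b - α))) := Real.exp_le_exp.mpr key
    _ = (y + α) / y := by
        rw [Real.exp_log (by positivity), hrhs]

theorem gamma_ratio_upper (α : ℝ) (hα : 1 ≤ α) (i k : ℕ) (hi : 0 < i) (hik : i < k) :
    (Real.Gamma (i + α) / Real.Gamma i) / (Real.Gamma (k + α) / Real.Gamma k) ≤
      ((i + (α - 1) / 2) / (k + (α - 1) / 2)) ^ α := by
  have hc : (0:ℝ) ≤ (α - 1) / 2 := by linarith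
  have hpos : ∀ n : ℕ, 0 < n → (0:ℝ) < Real.Gamma (n + α) / Real.Gamma n := by
    intro n hn
    have hn' : (0:ℝ) < n := by exact_mod_cast hn
    exact div_pos (Real.Gamma_pos_of_pos (by linarith)) (Real.Gamma_pos_of_pos hn')
  have main : ∀ n : ℕ, i ≤ n →
      Real.Gamma (i + α) / Real.Gamma i / ((i:ℝ) + (α - 1) / 2) ^ α ≤
      Real.Gamma (n + α) / Real.Gamma n / ((n:ℝ) + (α - 1) / 2) ^ α := by
    intro n hn
    induction n, hn using Nat.le_induction with
    | base => exact le_refl _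
    | succ n hn ih =>
      refine ih.trans ?_
      have hn0 : 0 < n := lt_of_lt_of_le hi hn
      have hn' : (0:ℝ) < n := by exact_mod_cast hn0
      have hA : 0 < Real.Gamma (n + α) / Real.Gamma n := hpos n hn0
      have hGn : 0 < Real.Gamma (n:ℝ) := Real.Gamma_pos_of_pos hn'
      have hrec : Real.Gamma ((n + 1 : ℕ) + α) / Real.Gamma ((n + 1 : ℕ):ℝ)
          = ((n:ℝ) + α) / n * (Real.Gamma (n + α) / Real.Gamma n) := by
        have g1 : Real.Gamma (((n:ℝ) + α) + 1) = ((n:ℝ) + α) * Real.Gamma ((n:ℝ) + α) :=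
          Real.Gamma_add_one (by positivity)
        have g2 : Real.Gamma ((n:ℝ) + 1) = (n:ℝ) * Real.Gamma (n:ℝ) :=
          Real.Gamma_add_one hn'.ne'
        push_cast
        rw [show (n:ℝ) + 1 + α = ((n:ℝ) + α) + 1 by ring, g1, g2]
        field_simp
      rw [hrec]
      have hd1 : (0:ℝ) < ((n:ℝ) + (α - 1) / 2) ^ α := by positivity
      have hd2 : (0:ℝ) < (((n + 1 : ℕ):ℝ) + (α - 1) / 2) ^ α := by positivity
      rw [div_le_div_iff₀ hd1 hd2]
      have hrat : ((((n + 1 : ℕ):ℝ) + (α - 1) / 2) / ((n:ℝ) + (α - 1) / 2)) ^ α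
          ≤ ((n:ℝ) + α) / n := by
        have : (((n + 1 : ℕ):ℝ) + (α - 1) / 2) / ((n:ℝ) + (α - 1) / 2)
            = (2 * (n:ℝ) + α + 1) / (2 * (n:ℝ) + α - 1) := by
          push_cast
          rw [div_eq_div_iff (by positivity) (by nlinarith)]
          ring
        rw [this]
        exact step_ineq α n hα hn'
      rw [Real.div_rpow (by positivity) (by positivity)] at hrat
      rw [div_le_div_iff₀ hd1 hn'] at hrat
      calc Real.Gamma (n + α) / Real.Gamma n * (((n + 1 : ℕ):ℝ) + (α - 1) / 2) ^ α
          ≤ Real.Gamma (n + α) / Real.Gamma n * (((n:ℝ) + α) / n * ((n:ℝ) + (α - 1) / 2) ^ α) := by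
            apply mul_le_mul_of_nonneg_left _ hA.le
            rw [div_mul_eq_mul_div, le_div_iff₀ hn']
            linarith
        _ = ((n:ℝ) + α) / n * (Real.Gamma (n + α) / Real.Gamma n) * ((n:ℝ) + (α - 1) / 2) ^ α := by
            ring
  have h := main k hik.le
  have hAk := hpos k (hi.trans hik)
  have hi' : (0:ℝ) < i := by exact_mod_cast hi
  have hk' : (0:ℝ) < k := by exact_mod_cast hi.trans hik
  have hdi : (0:ℝ) < ((i:ℝ) + (α - 1) / 2) ^ α := by positivity
  have hdk : (0:ℝ) < ((k:ℝ) + (α - 1) / 2) ^ α := by positivity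
  rw [div_le_div_iff₀ hdi hdk] at h
  rw [Real.div_rpow (by positivity) (by positivity), div_le_div_iff₀ hAk hdk]
  linarith
end

section
/- For every real α > 1 and every real z with 0 < z ≤ 2/(α+1), one has (1+z)^α ≤ 1 + 2αz/(2 - (α-1)z); note that 2 - (α-1)z > 0 under these hypotheses. -/
/-!
The right-hand side equals `(2 + (α + 1) z) / (2 - (α - 1) z)`, the `[1/1]` Padé approximant of
`(1 + z) ^ α` at `0`. Taking logarithms, the gap
`log (2 + (α + 1) x) - log (2 - (α - 1) x) - α log (1 + x)` vanishes at `0` and has derivative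
`α (α² - 1) x² / ((2 + (α + 1) x) (2 - (α - 1) x) (1 + x)) ≥ 0`, so it is nonnegative on `[0, z]`.
-/

open Real Set

noncomputable def padeLogGap (α x : ℝ) : ℝ :=
  log (2 + (α + 1) * x) - log (2 - (α - 1) * x) - α * log (1 + x)

lemma padeLogGap_zero (α : ℝ) : padeLogGap α 0 = 0 := by
  simp [padeLogGap]

lemma hasDerivAt_padeLogGap {α x : ℝ} (hA : 0 < 2 + (α + 1) * x) (hB : 0 < 2 - (α - 1) * x)
    (hC : 0 < 1 + x) :
    HasDerivAt (padeLogGap α)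
      (α * (α ^ 2 - 1) * x ^ 2 / ((2 + (α + 1) * x) * (2 - (α - 1) * x) * (1 + x))) x := by
  have hA' : HasDerivAt (fun y => 2 + (α + 1) * y) (α + 1) x := by
    simpa using ((hasDerivAt_id x).const_mul (α + 1)).const_add 2
  have hB' : HasDerivAt (fun y => 2 - (α - 1) * y) (-(α - 1)) x := by
    simpa using ((hasDerivAt_id x).const_mul (α - 1)).const_sub 2
  have hC' : HasDerivAt (fun y => 1 + y) 1 x := by
    simpa using (hasDerivAt_id x).const_add 1
  refine (((hA'.log hA.ne').sub (hB'.log hB.ne')).sub ((hC'.log hC.ne').const_mul α)).congr_deriv ?_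
  rw [div_sub_div _ _ hA.ne' hB.ne', mul_one_div, div_sub_div _ _ (by positivity) hC.ne']
  ring

lemma monotoneOn_padeLogGap {α z : ℝ} (hα : 1 ≤ α) (hz : (α - 1) * z < 2) :
    MonotoneOn (padeLogGap α) (Icc 0 z) := by
  have hpos : ∀ x ∈ Icc 0 z,
      0 < 2 + (α + 1) * x ∧ 0 < 2 - (α - 1) * x ∧ 0 < 1 + x := by
    rintro x ⟨hx0, hxz⟩
    have : (α - 1) * x ≤ (α - 1) * z := by gcongr
    exact ⟨by nlinarith, by linarith, by linarith⟩
  have hderiv : ∀ x ∈ Icc 0 z, HasDerivAt (padeLogGap α)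
      (α * (α ^ 2 - 1) * x ^ 2 / ((2 + (α + 1) * x) * (2 - (α - 1) * x) * (1 + x))) x :=
    fun x hx => hasDerivAt_padeLogGap (hpos x hx).1 (hpos x hx).2.1 (hpos x hx).2.2
  refine monotoneOn_of_hasDerivWithinAt_nonneg (convex_Icc 0 z)
    (fun x hx => (hderiv x hx).continuousAt.continuousWithinAt)
    (fun x hx => (hderiv x (interior_subset hx)).hasDerivWithinAt) fun x hx => ?_
  obtain ⟨hA, hB, hC⟩ := hpos x (interior_subset hx)
  have hα2 : 0 ≤ α ^ 2 - 1 := by nlinarith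
  positivity

theorem one_add_rpow_le_pade {α z : ℝ} (hα : 1 ≤ α) (hz : 0 ≤ z) (hz2 : (α - 1) * z < 2) :
    (1 + z) ^ α ≤ (2 + (α + 1) * z) / (2 - (α - 1) * z) := by
  have hA : 0 < 2 + (α + 1) * z := by nlinarith
  have hB : 0 < 2 - (α - 1) * z := by linarith
  have hgap : padeLogGap α 0 ≤ padeLogGap α z :=
    monotoneOn_padeLogGap hα hz2 (left_mem_Icc.mpr hz) (right_mem_Icc.mpr hz) hz
  rw [padeLogGap_zero, padeLogGap] at hgap
  rw [rpow_le_iff_le_log (by linarith) (div_pos hA hB), log_div hA.ne' hB.ne']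
  linarith

theorem power_ineq (α z : ℝ) (hα : 1 < α) (hz : 0 < z) (hz' : z ≤ 2 / (α + 1)) :
    0 < 2 - (α - 1) * z ∧ (1 + z) ^ α ≤ 1 + 2 * α * z / (2 - (α - 1) * z) := by
  have hz2 : (α + 1) * z ≤ 2 := by rwa [le_div_iff₀ (by linarith), mul_comm] at hz'
  have hB : 0 < 2 - (α - 1) * z := by nlinarith
  refine ⟨hB, ?_⟩
  have hpade : 1 + 2 * α * z / (2 - (α - 1) * z) = (2 + (α + 1) * z) / (2 - (α - 1) * z) := by
    rw [eq_div_iff hB.ne', add_mul, div_mul_cancel₀ _ hB.ne']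
    ring
  rw [hpade]
  exact one_add_rpow_le_pade hα.le hz.le (by linarith)
end

section
/- Let i < k be positive integers. If -1 < α ≤ 0 or α ≥ 1, then (i/k)^α ≤ (Γ(i+α)/Γ(i)) / (Γ(k+α)/Γ(k)) ≤ ((i + (α-1)/2)/(k + (α-1)/2))^α. -/
open Real Set

/-! With `R n = Γ(n + α) / Γ n`, the recursion `Γ(x + 1) = x Γ(x)` gives
`R (n + 1) / R n = (n + α) / n`, so both bounds telescope from one-step inequalities.
The lower one, `(n + α) / n ≤ ((n + 1) / n) ^ α`, is Bernoulli's inequality. The upper one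
becomes `((1 + s) / (1 - s)) ^ α ≤ (1 + α s) / (1 - α s)` after substituting
`s = 1 / (2 n + α)`; on logarithms it compares the odd series
`log (1 + t) - log (1 - t) = 2 ∑ t ^ (2k+1) / (2k+1)` at `t = s` and `t = α s` term by term,
which works because `α ≤ α ^ (2k+1)` for `α ∈ [-1, 0] ∪ [1, ∞)`. -/

theorem one_add_mul_self_le_rpow_one_add_of_nonpos {s : ℝ} (hs : -1 < s) {p : ℝ} (hp : p ≤ 0) :
    1 + p * s ≤ (1 + s) ^ p := by
  have hlog : log (1 + s) ≤ s := by linarith [log_le_sub_one_of_pos (by linarith : 0 < 1 + s)]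
  calc 1 + p * s ≤ p * log (1 + s) + 1 := by nlinarith
    _ ≤ exp (log (1 + s) * p) := by rw [mul_comm]; exact add_one_le_exp _
    _ = (1 + s) ^ p := (rpow_def_of_pos (by linarith) p).symm

theorem self_le_pow_two_mul_add_one {R : Type*} [CommRing R] [LinearOrder R]
    [IsStrictOrderedRing R] {a : R} (ha : (-1 ≤ a ∧ a ≤ 0) ∨ 1 ≤ a) (k : ℕ) :
    a ≤ a ^ (2 * k + 1) := by
  rcases ha with ⟨ha₁, ha₀⟩ | ha
  · have hsq : (a ^ 2) ^ k ≤ 1 := pow_le_one₀ (sq_nonneg a) (by nlinarith)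
    rw [pow_succ, pow_mul]
    simpa using mul_le_mul_of_nonpos_right hsq ha₀
  · exact le_self_pow₀ ha (by omega)

theorem mul_log_one_add_sub_log_one_sub_le {a s : ℝ} (ha : (-1 ≤ a ∧ a ≤ 0) ∨ 1 ≤ a)
    (hs₀ : 0 ≤ s) (hs₁ : s < 1) (has : |a * s| < 1) :
    a * (log (1 + s) - log (1 - s)) ≤ log (1 + a * s) - log (1 - a * s) := by
  refine hasSum_le (fun k => ?_) ((hasSum_log_sub_log_of_abs_lt_one
    (by rwa [abs_of_nonneg hs₀])).mul_left a) (hasSum_log_sub_log_of_abs_lt_one has)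
  have hc : 0 ≤ 2 * (1 / (2 * (k : ℝ) + 1)) * s ^ (2 * k + 1) := by positivity
  linear_combination mul_le_mul_of_nonneg_left (self_le_pow_two_mul_add_one ha k) hc

theorem rpow_one_add_div_one_sub_le {a s : ℝ} (ha : (-1 ≤ a ∧ a ≤ 0) ∨ 1 ≤ a)
    (hs₀ : 0 ≤ s) (hs₁ : s < 1) (has : |a * s| < 1) :
    ((1 + s) / (1 - s)) ^ a ≤ (1 + a * s) / (1 - a * s) := by
  obtain ⟨has₁, has₂⟩ := abs_lt.1 has
  have hpos : 0 < (1 + s) / (1 - s) := div_pos (by linarith) (by linarith)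
  rw [← log_le_log_iff (rpow_pos_of_pos hpos a) (div_pos (by linarith) (by linarith)),
    log_rpow hpos, log_div (by linarith) (by linarith), log_div (by linarith) (by linarith)]
  exact mul_log_one_add_sub_log_one_sub_le ha hs₀ hs₁ has

theorem add_div_self_le_rpow_add_one_div_self {x α : ℝ} (hx : 0 < x) (hα : α ≤ 0 ∨ 1 ≤ α) :
    (x + α) / x ≤ ((x + 1) / x) ^ α := by
  have hs : -1 < 1 / x := by linarith [one_div_pos.2 hx]
  have h : 1 + α * (1 / x) ≤ (1 + 1 / x) ^ α :=
    hα.elim (one_add_mul_self_le_rpow_one_add_of_nonpos hs)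
      (one_add_mul_self_le_rpow_one_add hs.le)
  rwa [mul_one_div, one_add_div hx.ne', one_add_div hx.ne'] at h

theorem rpow_add_one_add_div_add_le_add_div_self {x α : ℝ} (hx : 0 < x) (hxα : 0 < x + α)
    (hα : (-1 ≤ α ∧ α ≤ 0) ∨ 1 ≤ α) (h : 1 < 2 * x + α) :
    ((x + 1 + (α - 1) / 2) / (x + (α - 1) / 2)) ^ α ≤ (x + α) / x := by
  set s := 1 / (2 * x + α) with hs
  have hpos : 0 < 2 * x + α := by linarith
  have hne : x * 2 + α ≠ 0 := by linarith
  have hs₀ : 0 ≤ s := by positivity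
  have hs₁ : s < 1 := by rw [hs, div_lt_one hpos]; exact h
  have has : |α * s| < 1 := by
    rw [hs, mul_one_div, abs_div, abs_of_pos hpos, div_lt_one hpos, abs_lt]
    constructor <;> linarith
  have e₁ : (x + 1 + (α - 1) / 2) / (x + (α - 1) / 2) = (1 + s) / (1 - s) := by
    rw [div_eq_div_iff (by linarith) (by linarith), hs]
    field_simp [hne]
    ring
  have e₂ : (x + α) / x = (1 + α * s) / (1 - α * s) := by
    rw [div_eq_div_iff hx.ne' (by linarith [(abs_lt.1 has).2]), hs]
    field_simp [hne]
    ring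
  rw [e₁, e₂]
  exact rpow_one_add_div_one_sub_le hα hs₀ hs₁ has

theorem Gamma_add_div_Gamma_add_one {x : ℝ} (α : ℝ) (hx : x ≠ 0) (hxα : x + α ≠ 0) :
    Gamma (x + 1 + α) / Gamma (x + 1) = Gamma (x + α) / Gamma x * ((x + α) / x) := by
  rw [add_right_comm, Gamma_add_one hx, Gamma_add_one hxα]
  ring

theorem antitoneOn_Gamma_add_div_Gamma_div_rpow {α : ℝ} (hα₁ : -1 < α) (hα : α ≤ 0 ∨ 1 ≤ α) :
    AntitoneOn (fun n : ℕ => Gamma (n + α) / Gamma n / (n : ℝ) ^ α) (Ici 1) := by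
  refine antitoneOn_nat_Ici_of_succ_le fun n hn => ?_
  have hn : (1 : ℝ) ≤ n := by exact_mod_cast hn
  have hR : 0 ≤ Gamma (n + α) / Gamma n :=
    div_nonneg (Gamma_pos_of_pos (by linarith)).le (Gamma_pos_of_pos (by linarith)).le
  have hstep := add_div_self_le_rpow_add_one_div_self (by linarith : (0 : ℝ) < n) hα
  rw [div_rpow (by linarith) (by linarith), le_div_iff₀ (by positivity)] at hstep
  push_cast
  rw [Gamma_add_div_Gamma_add_one α (by positivity) (by linarith),
    div_le_div_iff₀ (by positivity) (by positivity), mul_assoc]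
  exact mul_le_mul_of_nonneg_left hstep hR

theorem monotoneOn_Gamma_add_div_Gamma_div_rpow_add {α : ℝ} (hα : (-1 < α ∧ α ≤ 0) ∨ 1 ≤ α) :
    MonotoneOn (fun n : ℕ => Gamma (n + α) / Gamma n / ((n : ℝ) + (α - 1) / 2) ^ α)
      (Ici 1) := by
  have hα₁ : -1 < α := by rcases hα with ⟨h, -⟩ | h <;> linarith
  refine monotoneOn_nat_Ici_of_le_succ fun n hn => ?_
  have hn : (1 : ℝ) ≤ n := by exact_mod_cast hn
  have hR : 0 ≤ Gamma (n + α) / Gamma n :=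
    div_nonneg (Gamma_pos_of_pos (by linarith)).le (Gamma_pos_of_pos (by linarith)).le
  have hc : 0 < (n : ℝ) + (α - 1) / 2 := by linarith
  have hc₁ : 0 < (n : ℝ) + 1 + (α - 1) / 2 := by linarith
  have hstep := rpow_add_one_add_div_add_le_add_div_self (by linarith : (0 : ℝ) < n)
    (by linarith) (hα.imp_left fun h => ⟨h.1.le, h.2⟩) (by linarith)
  rw [div_rpow hc₁.le hc.le, div_le_iff₀ (rpow_pos_of_pos hc α)] at hstep
  push_cast
  rw [Gamma_add_div_Gamma_add_one α (by positivity) (by linarith),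
    div_le_div_iff₀ (rpow_pos_of_pos hc α) (rpow_pos_of_pos hc₁ α), mul_assoc]
  exact mul_le_mul_of_nonneg_left hstep hR

theorem gamma_ratio_two_sided (α : ℝ) (hα : (-1 < α ∧ α ≤ 0) ∨ 1 ≤ α)
    (i k : ℕ) (hi : 0 < i) (hik : i < k) :
    ((i : ℝ) / k) ^ α ≤
        (Real.Gamma (i + α) / Real.Gamma i) / (Real.Gamma (k + α) / Real.Gamma k) ∧
    (Real.Gamma (i + α) / Real.Gamma i) / (Real.Gamma (k + α) / Real.Gamma k) ≤
        ((i + (α - 1) / 2) / (k + (α - 1) / 2)) ^ α := by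
  have hα₁ : -1 < α := by rcases hα with ⟨h, -⟩ | h <;> linarith
  have hi₁ : (1 : ℝ) ≤ i := by exact_mod_cast hi
  have hk₁ : (1 : ℝ) ≤ k := by exact_mod_cast hi.trans hik
  have hRi : 0 < Gamma (i + α) / Gamma i :=
    div_pos (Gamma_pos_of_pos (by linarith)) (Gamma_pos_of_pos (by linarith))
  have hRk : 0 < Gamma (k + α) / Gamma k :=
    div_pos (Gamma_pos_of_pos (by linarith)) (Gamma_pos_of_pos (by linarith))
  have hlower := antitoneOn_Gamma_add_div_Gamma_div_rpow hα₁ (hα.imp_left And.right)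
    (mem_Ici.2 hi) (mem_Ici.2 (hi.trans hik)) hik.le
  have hupper := monotoneOn_Gamma_add_div_Gamma_div_rpow_add hα
    (mem_Ici.2 hi) (mem_Ici.2 (hi.trans hik)) hik.le
  have hci : 0 < (i : ℝ) + (α - 1) / 2 := by linarith
  have hck : 0 < (k : ℝ) + (α - 1) / 2 := by linarith
  simp only at hlower hupper
  rw [div_le_div_iff₀ (by positivity) (by positivity)] at hlower
  rw [div_le_div_iff₀ (rpow_pos_of_pos hci α) (rpow_pos_of_pos hck α)] at hupper
  constructor
  · rw [div_rpow (by linarith) (by linarith), div_le_div_iff₀ (by positivity) hRk]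
    linarith
  · rw [div_rpow hci.le hck.le, div_le_div_iff₀ hRk (rpow_pos_of_pos hck α)]
    linarith
end

section
/- Let i < k be positive integers. If 0 ≤ α ≤ 1, then (i/k)^α ≥ (Γ(i+α)/Γ(i)) / (Γ(k+α)/Γ(k)) ≥ ((i + (α-1)/2)/(k + (α-1)/2))^α. -/
/-! Since `Γ(x + 1 + α) / Γ(x + 1) = (x + α) / x · Γ(x + α) / Γ(x)`, both bounds telescope over
`j = i, …, k - 1` to the one-step inequalities
`((j + c) / (j + 1 + c)) ^ α ≤ j / (j + α) ≤ (j / (j + 1)) ^ α` with `c = (α - 1) / 2`.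
The right one is Bernoulli's inequality. With `w = 1 / (2j + α)` the left one reads
`((1 - w) / (1 + w)) ^ α ≤ (1 - α w) / (1 + α w)`, which follows by comparing the series
`log ((1 + t) / (1 - t)) = 2 ∑ t ^ (2n+1) / (2n+1)` termwise at `t = α w` and `t = w`. -/

open Real

theorem div_le_div_of_forall_div_succ_le {f g : ℕ → ℝ} {m : ℕ} (hf : ∀ n, m ≤ n → 0 < f n)
    (hg : ∀ n, m ≤ n → 0 < g n) (hstep : ∀ n, m ≤ n → g n / g (n + 1) ≤ f n / f (n + 1))
    {i k : ℕ} (hi : m ≤ i) (hik : i ≤ k) : g i / g k ≤ f i / f k := by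
  induction k, hik using Nat.le_induction with
  | base => rw [div_self (hg i hi).ne', div_self (hf i hi).ne']
  | succ k hik ih =>
    have hk : m ≤ k := hi.trans hik
    calc g i / g (k + 1) = g i / g k * (g k / g (k + 1)) := (div_mul_div_cancel₀ (hg k hk).ne').symm
      _ ≤ f i / f k * (f k / f (k + 1)) :=
        mul_le_mul ih (hstep k hk) (div_pos (hg k hk) (hg _ (hk.trans k.le_succ))).le
          (div_pos (hf i hi) (hf k hk)).le
      _ = f i / f (k + 1) := div_mul_div_cancel₀ (hf k hk).ne'

namespace Real

variable {α : ℝ}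

theorem rpow_one_sub_div_one_add_le (hα0 : 0 ≤ α) (hα1 : α ≤ 1) {w : ℝ} (hw0 : 0 ≤ w)
    (hw1 : w < 1) : ((1 - w) / (1 + w)) ^ α ≤ (1 - α * w) / (1 + α * w) := by
  have hαw : α * w ≤ w := mul_le_of_le_one_left hw0 hα1
  have hseries : log (1 + α * w) - log (1 - α * w) ≤ α * (log (1 + w) - log (1 - w)) := by
    refine hasSum_le (fun k => ?_)
      (hasSum_log_sub_log_of_abs_lt_one (by rw [abs_lt]; constructor <;> nlinarith))
      ((hasSum_log_sub_log_of_abs_lt_one (by rw [abs_lt]; constructor <;> linarith)).mul_left α)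
    have hpow : α ^ (2 * k + 1) ≤ α := pow_le_of_le_one hα0 hα1 (by omega)
    have hterm : 0 ≤ 2 * (1 / (2 * (k : ℝ) + 1)) * w ^ (2 * k + 1) := by positivity
    rw [mul_pow]
    nlinarith
  have hαw0 : 0 ≤ α * w := mul_nonneg hα0 hw0
  have hbase : 0 < (1 - w) / (1 + w) := div_pos (by linarith) (by linarith)
  rw [← log_le_log_iff (rpow_pos_of_pos hbase α) (div_pos (by linarith) (by linarith)),
    log_rpow hbase, log_div (by linarith) (by linarith), log_div (by linarith) (by linarith)]
  linarith

theorem div_add_le_rpow_div_add_one (hα0 : 0 ≤ α) (hα1 : α ≤ 1) {x : ℝ} (hx : 0 < x) :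
    x / (x + α) ≤ (x / (x + 1)) ^ α := by
  have hbernoulli : (1 + x⁻¹) ^ α ≤ 1 + α * x⁻¹ :=
    rpow_one_add_le_one_add_mul_self (by linarith [inv_pos.2 hx]) hα0 hα1
  have h1 : x / (x + α) = (1 + α * x⁻¹)⁻¹ := by field_simp
  have h2 : x / (x + 1) = (1 + x⁻¹)⁻¹ := by field_simp
  rw [h1, h2, inv_rpow (by positivity)]
  exact inv_anti₀ (by positivity) hbernoulli

theorem rpow_add_div_add_one_le_div_add (hα0 : 0 ≤ α) (hα1 : α ≤ 1) {x : ℝ}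
    (hxα : 0 < x + (α - 1) / 2) :
    ((x + (α - 1) / 2) / (x + 1 + (α - 1) / 2)) ^ α ≤ x / (x + α) := by
  have hx : 0 < x := by linarith
  have hpos : 0 < 2 * x + α := by linarith
  set w := 1 / (2 * x + α) with hw
  have hw0 : 0 < w := by positivity
  have hw1 : w < 1 := by rw [hw, div_lt_one hpos]; linarith
  have h1 : (x + (α - 1) / 2) / (x + 1 + (α - 1) / 2) = (1 - w) / (1 + w) := by
    rw [div_eq_div_iff (by linarith) (by linarith), hw]; field_simp; ring
  have h2 : x / (x + α) = (1 - α * w) / (1 + α * w) := by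
    rw [div_eq_div_iff (by linarith) (by positivity), hw]; field_simp; ring
  rw [h1, h2]
  exact rpow_one_sub_div_one_add_le hα0 hα1 hw0.le hw1

theorem Gamma_ratio_div_Gamma_ratio_add_one {x : ℝ} (hx : 0 < x) (hxα : 0 < x + α) :
    Gamma (x + α) / Gamma x / (Gamma (x + 1 + α) / Gamma (x + 1)) = x / (x + α) := by
  rw [add_right_comm, Gamma_add_one hxα.ne', Gamma_add_one hx.ne']
  have hΓx := (Gamma_pos_of_pos hx).ne'
  have hΓxα := (Gamma_pos_of_pos hxα).ne'
  field_simp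

theorem Gamma_ratio_div_le_rpow (hα0 : 0 ≤ α) (hα1 : α ≤ 1) {i k : ℕ} (hi : 0 < i) (hik : i ≤ k) :
    Gamma (i + α) / Gamma i / (Gamma (k + α) / Gamma k) ≤ ((i : ℝ) / k) ^ α := by
  rw [div_rpow (Nat.cast_nonneg i) (Nat.cast_nonneg k)]
  refine div_le_div_of_forall_div_succ_le (f := fun n : ℕ => (n : ℝ) ^ α)
    (g := fun n : ℕ => Gamma (n + α) / Gamma n) (fun n hn => ?_) (fun n hn => ?_)
    (fun n hn => ?_) hi hik
  all_goals have hn : (0 : ℝ) < n := Nat.cast_pos.2 hn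
  · exact rpow_pos_of_pos hn α
  · exact div_pos (Gamma_pos_of_pos (by linarith)) (Gamma_pos_of_pos hn)
  · push_cast
    rw [Gamma_ratio_div_Gamma_ratio_add_one hn (by linarith), ← div_rpow hn.le (by linarith)]
    exact div_add_le_rpow_div_add_one hα0 hα1 hn

theorem rpow_le_Gamma_ratio_div (hα0 : 0 ≤ α) (hα1 : α ≤ 1) {i k : ℕ} (hi : 0 < i) (hik : i ≤ k) :
    ((i + (α - 1) / 2) / (k + (α - 1) / 2)) ^ α ≤
      Gamma (i + α) / Gamma i / (Gamma (k + α) / Gamma k) := by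
  have hpos : ∀ n : ℕ, 1 ≤ n → 0 < (n : ℝ) + (α - 1) / 2 := fun n hn => by
    have : (1 : ℝ) ≤ n := Nat.one_le_cast.2 hn
    linarith
  rw [div_rpow (hpos i hi).le (hpos k (hi.trans_le hik)).le]
  refine div_le_div_of_forall_div_succ_le (g := fun n : ℕ => ((n : ℝ) + (α - 1) / 2) ^ α)
    (f := fun n : ℕ => Gamma (n + α) / Gamma n) (fun n hn => ?_) (fun n hn => ?_)
    (fun n hn => ?_) hi hik
  all_goals have hn' : (0 : ℝ) < n := Nat.cast_pos.2 hn
  · exact div_pos (Gamma_pos_of_pos (by linarith)) (Gamma_pos_of_pos hn')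
  · exact rpow_pos_of_pos (hpos n hn) α
  · push_cast
    rw [Gamma_ratio_div_Gamma_ratio_add_one hn' (by linarith),
      ← div_rpow (hpos n hn).le (by linarith [hpos n hn])]
    exact rpow_add_div_add_one_le_div_add hα0 hα1 (hpos n hn)

end Real

theorem gamma_ratio_two_sided_reversed (α : ℝ) (hα0 : 0 ≤ α) (hα1 : α ≤ 1)
    (i k : ℕ) (hi : 0 < i) (hik : i < k) :
    ((i + (α - 1) / 2) / (k + (α - 1) / 2)) ^ α ≤
        (Real.Gamma (i + α) / Real.Gamma i) / (Real.Gamma (k + α) / Real.Gamma k) ∧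
    (Real.Gamma (i + α) / Real.Gamma i) / (Real.Gamma (k + α) / Real.Gamma k) ≤
        ((i : ℝ) / k) ^ α :=
  ⟨rpow_le_Gamma_ratio_div hα0 hα1 hi hik.le, Gamma_ratio_div_le_rpow hα0 hα1 hi hik.le⟩
end

section
/- For every real α > -1 and integers 1 ≤ k ≤ n, the diagonal entries of the matrix A_n are a_{k,k} = k/(α+1), and consequently the trace of A_n equals n(n+1)/(2(α+1)). -/
/-- `β_j = (Γ(j+α)/Γ(j))^{1/2}`. -/
noncomputable def lagBeta (α : ℝ) (j : ℕ) : ℝ :=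
  Real.sqrt (Real.Gamma (j + α) / Real.Gamma j)

/-- The entries `a_{k,i} = (∑_{j=1}^{min(k,i)} β_j²)/(β_{k+1} β_{i+1})` of the matrix `A_n`. -/
noncomputable def lagEntry (α : ℝ) (k i : ℕ) : ℝ :=
  (∑ j ∈ Finset.Icc 1 (min k i), (lagBeta α j) ^ 2) / (lagBeta α (k + 1) * lagBeta α (i + 1))

/-! The functional equation `Γ(s+1) = s Γ(s)` gives `j β_{j+1}² = (j+α) β_j²`, from which
`∑_{j=1}^k β_j² = k/(α+1) · β_{k+1}²` follows by induction on `k`. Dividing by `β_{k+1}²` gives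
the diagonal entries, and summing them is Gauss's formula. -/

section LagBeta

variable {α : ℝ}

lemma lagBeta_sq (hα : -1 < α) {j : ℕ} (hj : 1 ≤ j) :
    lagBeta α j ^ 2 = Real.Gamma (j + α) / Real.Gamma j := by
  have hj' : (1 : ℝ) ≤ j := by exact_mod_cast hj
  refine Real.sq_sqrt (div_nonneg ?_ ?_) <;>
    exact Real.Gamma_nonneg_of_nonneg (by linarith)

lemma lagBeta_pos (hα : -1 < α) {j : ℕ} (hj : 1 ≤ j) : 0 < lagBeta α j := by
  have hj' : (1 : ℝ) ≤ j := by exact_mod_cast hj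
  exact Real.sqrt_pos.2 <|
    div_pos (Real.Gamma_pos_of_pos (by linarith)) (Real.Gamma_pos_of_pos (by linarith))

lemma natCast_mul_lagBeta_succ_sq (hα : -1 < α) {j : ℕ} (hj : 1 ≤ j) :
    j * lagBeta α (j + 1) ^ 2 = (j + α) * lagBeta α j ^ 2 := by
  have hj' : (1 : ℝ) ≤ j := by exact_mod_cast hj
  have hΓj : Real.Gamma j ≠ 0 := (Real.Gamma_pos_of_pos (by linarith)).ne'
  rw [lagBeta_sq hα hj, lagBeta_sq hα (by omega), Nat.cast_succ, add_right_comm,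
    Real.Gamma_add_one (by linarith), Real.Gamma_add_one (by linarith)]
  field_simp

lemma sum_lagBeta_sq (hα : -1 < α) (k : ℕ) :
    ∑ j ∈ Finset.Icc 1 k, lagBeta α j ^ 2 = k / (α + 1) * lagBeta α (k + 1) ^ 2 := by
  induction k with
  | zero => simp
  | succ k ih =>
    have hrec := natCast_mul_lagBeta_succ_sq hα (j := k + 1) (by omega)
    have hα1 : α + 1 ≠ 0 := by linarith
    rw [Finset.sum_Icc_succ_top (by omega), ih]
    push_cast at hrec ⊢
    field_simp
    linear_combination -hrec

lemma lagEntry_self (hα : -1 < α) {k : ℕ} (hk : 1 ≤ k) : lagEntry α k k = k / (α + 1) := by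
  have hβ := (lagBeta_pos hα (j := k + 1) (by omega)).ne'
  rw [lagEntry, min_self, sum_lagBeta_sq hα, sq]
  field_simp

end LagBeta

lemma sum_Icc_natCast (n : ℕ) : ∑ k ∈ Finset.Icc 1 n, (k : ℝ) = n * (n + 1) / 2 := by
  induction n with
  | zero => simp
  | succ n ih =>
    rw [Finset.sum_Icc_succ_top (by omega), ih]
    push_cast
    ring

theorem diag_and_trace_general (α : ℝ) (hα : -1 < α) (n : ℕ) :
    (∀ k : ℕ, 1 ≤ k → k ≤ n → lagEntry α k k = k / (α + 1)) ∧
    ∑ k ∈ Finset.Icc 1 n, lagEntry α k k = n * (n + 1) / (2 * (α + 1)) := by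
  refine ⟨fun k hk _ => lagEntry_self hα hk, ?_⟩
  calc ∑ k ∈ Finset.Icc 1 n, lagEntry α k k
      = ∑ k ∈ Finset.Icc 1 n, (k : ℝ) / (α + 1) :=
        Finset.sum_congr rfl fun k hk => lagEntry_self hα (Finset.mem_Icc.mp hk).1
    _ = n * (n + 1) / (2 * (α + 1)) := by
        rw [← Finset.sum_div, sum_Icc_natCast, div_div]

theorem diag_and_trace (α : ℝ) (hα : -1 < α) (n : ℕ) (hn : 1 ≤ n) :
    (∀ k : ℕ, 1 ≤ k → k ≤ n → lagEntry α k k = k / (α + 1)) ∧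
    ∑ k ∈ Finset.Icc 1 n, lagEntry α k k = n * (n + 1) / (2 * (α + 1)) :=
  diag_and_trace_general α hα n
end
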